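/- arXiv:0804.3012 — 5 statements merged into one kernel-verified Lean document; each statement's English description precedes it below -/
import Mathlib

section
/- Let g : [0,σ] → [0,∞) be continuous with g(0) = g(σ) = 0, let T_g = [0,σ]/∼_g be the quotient by the relation s ∼_g t iff d_g(s,t) = 0, equipped with the induced metric d_g, and let p_g : [0,σ] → T_g be the canonical projection. Then for 0 ≤ s < t ≤ σ, p_g(s) ≺ p_g(t) (i.e. p_g(s) lies on the segment from the root p_g(0) to p_g(t)) if and only if g(s) = m_g(s,t). -/
/-! Since `g ≥ 0` and `g 0 = 0`, the minimum of `g` over `[0, u]` is `0`, so `d 0 u = g u`.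
The relation `d 0 t = d 0 s + d s t` then reads `g t = 2 g s + g t - 2 m s t`. -/

open Set

theorem csInf_image_eq_of_isMinOn {α β : Type*} [ConditionallyCompleteLinearOrder β]
    {f : α → β} {s : Set α} {a : α} (ha : a ∈ s) (hmin : IsMinOn f s a) :
    sInf (f '' s) = f a :=
  IsLeast.csInf_eq ⟨mem_image_of_mem f ha, forall_mem_image.2 fun _ hx => isMinOn_iff.1 hmin _ hx⟩

theorem stmt3_general (σ : ℝ) (g : ℝ → ℝ)
    (hnonneg : ∀ x ∈ Set.Icc (0:ℝ) σ, 0 ≤ g x)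
    (h0 : g 0 = 0)
    (m : ℝ → ℝ → ℝ)
    (hm : ∀ s t : ℝ, m s t = sInf (g '' Set.Icc (min s t) (max s t)))
    (d : ℝ → ℝ → ℝ)
    (hd : ∀ s t : ℝ, d s t = g s + g t - 2 * m s t)
    (s t : ℝ) (hs : 0 ≤ s) (hst : s < t) (ht : t ≤ σ) :
    d 0 t = d 0 s + d s t ↔ g s = m s t := by
  have m_zero_left : ∀ u ∈ Icc 0 σ, m 0 u = 0 := fun u hu => by
    rw [hm, min_eq_left hu.1, max_eq_right hu.1, csInf_image_eq_of_isMinOn (left_mem_Icc.2 hu.1)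
      (isMinOn_iff.2 fun x hx => h0.symm ▸ hnonneg x ⟨hx.1, hx.2.trans hu.2⟩), h0]
  rw [hd, hd, hd, m_zero_left s ⟨hs, hst.le.trans ht⟩, m_zero_left t ⟨hs.trans hst.le, ht⟩, h0]
  constructor <;> intro <;> linarith

/-- for `0 ≤ s < t ≤ σ`, `p_g(s) ≺ p_g(t)` (expressed through the
pseudo-metric `d_g` as `d_g(0,t) = d_g(0,s) + d_g(s,t)`) iff `g s = m_g(s,t)`. -/
theorem stmt3 (σ : ℝ) (hσ : 0 < σ) (g : ℝ → ℝ)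
    (hg : ContinuousOn g (Set.Icc 0 σ))
    (hnonneg : ∀ x ∈ Set.Icc (0:ℝ) σ, 0 ≤ g x)
    (h0 : g 0 = 0) (h1 : g σ = 0)
    (m : ℝ → ℝ → ℝ)
    (hm : ∀ s t : ℝ, m s t = sInf (g '' Set.Icc (min s t) (max s t)))
    (d : ℝ → ℝ → ℝ)
    (hd : ∀ s t : ℝ, d s t = g s + g t - 2 * m s t)
    (s t : ℝ) (hs : 0 ≤ s) (hst : s < t) (ht : t ≤ σ) :
    d 0 t = d 0 s + d s t ↔ g s = m s t :=
  stmt3_general σ g hnonneg h0 m hm d hd s t hs hst ht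
end

section
/- Let g : [0,σ] → [0,∞) be continuous with g(0) = g(σ) = 0 and let 0 ≤ s < t ≤ σ. Then the segment [p_g(s), p_g(t)] in the tree T_g is contained in p_g([s,t]), and p_g(s) △ p_g(t) = p_g(r) for any r ∈ [s,t] achieving g(r) = m_g(s,t). -/
/-!
Write `m(a,b) = infBetween g a b` for the infimum of `g` between `a` and `b`, and
`d(a,b) = treeDist g a b = g a + g b - 2 m(a,b)`.
If `x > t` lies on the segment, then `d(s,x) + d(x,t) = d(s,t)` together with
`m(s,x) ≤ m(s,t)` and `m(t,x) ≤ g x ≤ m(s,x)` forces `g x = m(t,x)` and `m(s,t) ≤ g x`;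
the last time `r ≤ t` at which `g` takes the value `g x` then satisfies `m(r,x) = g x = g r`,
i.e. `d(x,r) = 0`. The case `x < s` is the mirror image under `u ↦ -u`, and `x ∈ [s,t]` is
trivial. For the ancestor, a minimum point `r` of `g` on `[s,t]` has `m(r,s) = m(r,t) = g r`,
and `d(0,·) = g` because `g ≥ 0 = g 0`.
-/

open Set

noncomputable section

def infBetween (g : ℝ → ℝ) (a b : ℝ) : ℝ := sInf (g '' uIcc a b)

def treeDist (g : ℝ → ℝ) (a b : ℝ) : ℝ := g a + g b - 2 * infBetween g a b

variable {g : ℝ → ℝ} {a b c r s t x : ℝ}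

theorem infBetween_comm : infBetween g a b = infBetween g b a := by
  rw [infBetween, infBetween, uIcc_comm]

theorem infBetween_le (hbdd : BddBelow (g '' uIcc a b)) (hu : c ∈ uIcc a b) :
    infBetween g a b ≤ g c :=
  csInf_le hbdd (mem_image_of_mem g hu)

theorem infBetween_eq_of_forall_le (hr : r ∈ uIcc a b) (hmin : ∀ u ∈ uIcc a b, g r ≤ g u) :
    infBetween g a b = g r :=
  IsLeast.csInf_eq ⟨mem_image_of_mem g hr, forall_mem_image.2 hmin⟩

theorem infBetween_le_infBetween (hbdd : BddBelow (g '' uIcc a b)) (hsub : uIcc s t ⊆ uIcc a b) :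
    infBetween g a b ≤ infBetween g s t :=
  csInf_le_csInf hbdd (nonempty_uIcc.image g) (image_mono hsub)

theorem exists_eq_infBetween (hg : ContinuousOn g (uIcc a b)) :
    ∃ u ∈ uIcc a b, g u = infBetween g a b :=
  (isCompact_uIcc.image_of_continuousOn hg).sInf_mem (nonempty_uIcc.image g)

theorem infBetween_comp_neg : infBetween (fun u ↦ g (-u)) (-a) (-b) = infBetween g a b := by
  rw [infBetween, infBetween, ← image_neg_uIcc, image_image]
  simp only [neg_neg]

theorem treeDist_self : treeDist g a a = 0 := by
  rw [treeDist, infBetween_eq_of_forall_le left_mem_uIcc (by simp)]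
  ring

theorem treeDist_comm : treeDist g a b = treeDist g b a := by
  rw [treeDist, treeDist, infBetween_comm, add_comm (g a)]

theorem treeDist_comp_neg : treeDist (fun u ↦ g (-u)) (-a) (-b) = treeDist g a b := by
  simp only [treeDist, infBetween_comp_neg, neg_neg]

theorem exists_last_eq_of_le (hg : ContinuousOn g (Icc s t)) (hu : ∃ u ∈ Icc s t, g u ≤ c)
    (ht : c ≤ g t) : ∃ r ∈ Icc s t, g r = c ∧ ∀ u ∈ Icc r t, c ≤ g u := by
  obtain ⟨u, hu, hgu⟩ := hu
  have hlevel : IsCompact (Icc s t ∩ g ⁻¹' {c}) :=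
    isCompact_Icc.of_isClosed_subset
      (hg.preimage_isClosed_of_isClosed isClosed_Icc isClosed_singleton) inter_subset_left
  have hne : (Icc s t ∩ g ⁻¹' {c}).Nonempty := by
    obtain ⟨v, hv, hgv⟩ :=
      intermediate_value_Icc hu.2 (hg.mono (Icc_subset_Icc_left hu.1)) ⟨hgu, ht⟩
    exact ⟨v, ⟨hu.1.trans hv.1, hv.2⟩, hgv⟩
  obtain ⟨r, ⟨hr, hgr⟩, hlast⟩ := hlevel.exists_isGreatest hne
  refine ⟨r, hr, hgr, fun v hv ↦ le_of_not_gt fun hlt ↦ ?_⟩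
  obtain ⟨w, hw, hgw⟩ := intermediate_value_Icc hv.2
    (hg.mono (Icc_subset_Icc_left (hr.1.trans hv.1))) ⟨hlt.le, ht⟩
  have hwr : w ≤ r := hlast ⟨⟨hr.1.trans (hv.1.trans hw.1), hw.2⟩, hgw⟩
  have hgv : g v = c := le_antisymm (hw.1.trans hwr) hv.1 ▸ hgr
  exact hlt.ne hgv

theorem exists_treeDist_eq_zero_of_right (hg : ContinuousOn g (Icc s x)) (hst : s ≤ t)
    (htx : t ≤ x) (hseg : treeDist g s x + treeDist g x t = treeDist g s t) :
    ∃ r ∈ Icc s t, treeDist g x r = 0 := by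
  have hsx : s ≤ x := hst.trans htx
  have hbdd : BddBelow (g '' uIcc s x) :=
    isCompact_uIcc.bddBelow_image (by rwa [uIcc_of_le hsx])
  have hmono : infBetween g s x ≤ infBetween g s t :=
    infBetween_le_infBetween hbdd (uIcc_subset_uIcc left_mem_uIcc (mem_uIcc_of_le hst htx))
  have hmsx : infBetween g s x ≤ g x := infBetween_le hbdd right_mem_uIcc
  have hbdd' : BddBelow (g '' uIcc t x) :=
    hbdd.mono (image_mono (uIcc_subset_uIcc (mem_uIcc_of_le hst htx) right_mem_uIcc))
  have hmtx : infBetween g t x ≤ g x := infBetween_le hbdd' right_mem_uIcc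
  have hgx : g x = infBetween g s x + infBetween g t x - infBetween g s t := by
    rw [treeDist, treeDist, treeDist, infBetween_comm (a := x)] at hseg
    linarith
  have hlevel : g x = infBetween g t x := by linarith
  obtain ⟨u, hu, hgu⟩ := exists_eq_infBetween (g := g) (a := s) (b := t)
    (hg.mono (by rw [uIcc_of_le hst]; exact Icc_subset_Icc_right htx))
  obtain ⟨r, hr, hgr, hafter⟩ := exists_last_eq_of_le (hg.mono (Icc_subset_Icc_right htx))
    ⟨u, by rwa [← uIcc_of_le hst], by linarith⟩ (hlevel ▸ infBetween_le hbdd' left_mem_uIcc)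
  refine ⟨r, hr, ?_⟩
  have hxr : infBetween g x r = g x := by
    refine infBetween_eq_of_forall_le left_mem_uIcc fun v hv ↦ ?_
    rw [uIcc_of_ge (hr.2.trans htx)] at hv
    rcases le_total v t with hvt | htv
    · exact hafter v ⟨hv.1, hvt⟩
    · rw [hlevel]
      exact infBetween_le hbdd' (mem_uIcc_of_le htv hv.2)
  rw [treeDist, hxr, hgr]
  ring

theorem exists_treeDist_eq_zero_of_left (hg : ContinuousOn g (Icc x t)) (hxs : x ≤ s)
    (hst : s ≤ t) (hseg : treeDist g s x + treeDist g x t = treeDist g s t) :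
    ∃ r ∈ Icc s t, treeDist g x r = 0 := by
  have hg' : ContinuousOn (fun u ↦ g (-u)) (Icc (-t) (-x)) :=
    hg.comp continuousOn_neg fun u hu ↦ ⟨le_neg.1 hu.2, neg_le.1 hu.1⟩
  have hseg' : treeDist (fun u ↦ g (-u)) (-t) (-x) + treeDist (fun u ↦ g (-u)) (-x) (-s) =
      treeDist (fun u ↦ g (-u)) (-t) (-s) := by
    rw [treeDist_comp_neg, treeDist_comp_neg, treeDist_comp_neg, treeDist_comm (a := t) (b := s),
      ← hseg, treeDist_comm (a := x) (b := s), treeDist_comm (a := t) (b := x)]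
    exact add_comm _ _
  obtain ⟨r, hr, hxr⟩ :=
    exists_treeDist_eq_zero_of_right hg' (neg_le_neg hst) (neg_le_neg hxs) hseg'
  refine ⟨-r, ⟨le_neg.1 hr.2, neg_le.1 hr.1⟩, ?_⟩
  rwa [← neg_neg r, treeDist_comp_neg] at hxr

theorem exists_treeDist_eq_zero_of_add_eq (hg : ContinuousOn g (Icc a b)) (hs : a ≤ s)
    (hst : s ≤ t) (ht : t ≤ b) (hx : x ∈ Icc a b)
    (hseg : treeDist g s x + treeDist g x t = treeDist g s t) :
    ∃ r ∈ Icc s t, treeDist g x r = 0 := by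
  rcases lt_or_ge x s with hxs | hsx
  · exact exists_treeDist_eq_zero_of_left (hg.mono (Icc_subset_Icc hx.1 ht)) hxs.le hst hseg
  rcases le_or_gt x t with hxt | htx
  · exact ⟨x, ⟨hsx, hxt⟩, treeDist_self⟩
  · exact exists_treeDist_eq_zero_of_right (hg.mono (Icc_subset_Icc hs hx.2)) hst htx.le hseg

theorem treeDist_zero_left (h0 : g 0 = 0) (hnonneg : ∀ u ∈ uIcc 0 a, 0 ≤ g u) :
    treeDist g 0 a = g a := by
  rw [treeDist, infBetween_eq_of_forall_le left_mem_uIcc fun u hu ↦ h0.le.trans (hnonneg u hu), h0]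
  ring

theorem infBetween_eq_of_eq_infBetween (hbdd : BddBelow (g '' uIcc a b))
    (hsub : uIcc s t ⊆ uIcc a b) (hr : r ∈ uIcc s t) (hgr : g r = infBetween g a b) :
    infBetween g s t = g r :=
  infBetween_eq_of_forall_le hr fun _ hu ↦ hgr ▸ infBetween_le hbdd (hsub hu)

end

theorem stmt5_general (σ : ℝ) (g : ℝ → ℝ)
    (hg : ContinuousOn g (Set.Icc 0 σ))
    (hnonneg : ∀ x ∈ Set.Icc (0:ℝ) σ, 0 ≤ g x)
    (h0 : g 0 = 0)
    (m : ℝ → ℝ → ℝ)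
    (hm : ∀ s t : ℝ, m s t = sInf (g '' Set.Icc (min s t) (max s t)))
    (d : ℝ → ℝ → ℝ)
    (hd : ∀ s t : ℝ, d s t = g s + g t - 2 * m s t)
    (s t : ℝ) (hs : 0 ≤ s) (hst : s < t) (ht : t ≤ σ) :
    (∀ x ∈ Set.Icc (0:ℝ) σ, d s x + d x t = d s t → ∃ r ∈ Set.Icc s t, d x r = 0) ∧
    (∀ r ∈ Set.Icc s t, g r = m s t →
      d 0 r = m s t ∧ d 0 s = d 0 r + d r s ∧ d 0 t = d 0 r + d r t) := by
  obtain rfl : m = infBetween g := funext₂ hm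
  obtain rfl : d = treeDist g := funext₂ hd
  refine ⟨fun x hx hseg ↦ exists_treeDist_eq_zero_of_add_eq hg hs hst.le ht hx hseg,
    fun r hr hgr ↦ ?_⟩
  have hσ : 0 ≤ σ := hs.trans (hst.le.trans ht)
  have hsub : uIcc s t ⊆ Icc 0 σ := uIcc_subset_Icc ⟨hs, hst.le.trans ht⟩ ⟨hs.trans hst.le, ht⟩
  have hbdd : BddBelow (g '' uIcc s t) := ⟨0, forall_mem_image.2 fun u hu ↦ hnonneg u (hsub hu)⟩
  have hroot : ∀ a ∈ uIcc s t, treeDist g 0 a = g a := fun a ha ↦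
    treeDist_zero_left h0 fun u hu ↦ hnonneg u (uIcc_subset_Icc (left_mem_Icc.2 hσ) (hsub ha) hu)
  rw [← uIcc_of_le hst.le] at hr
  have hrs : infBetween g r s = g r :=
    infBetween_eq_of_eq_infBetween hbdd (uIcc_subset_uIcc hr left_mem_uIcc) left_mem_uIcc hgr
  have hrt : infBetween g r t = g r :=
    infBetween_eq_of_eq_infBetween hbdd (uIcc_subset_uIcc hr right_mem_uIcc) left_mem_uIcc hgr
  refine ⟨by rw [hroot r hr, hgr], ?_, ?_⟩
  · rw [hroot s left_mem_uIcc, hroot r hr, treeDist, hrs]; ring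
  · rw [hroot t right_mem_uIcc, hroot r hr, treeDist, hrt]; ring

/-- for `0 ≤ s < t ≤ σ`, the segment `[p_g(s), p_g(t)]` is contained in
`p_g([s,t])` (any point on the segment, i.e. any class `x` with
`d(s,x) + d(x,t) = d(s,t)`, is equivalent to some `r ∈ [s,t]`), and for any
`r ∈ [s,t]` with `g r = m_g(s,t)`, the class of `r` is the most recent common
ancestor `p_g(s) △ p_g(t)`: it is an ancestor of both `p_g(s)` and `p_g(t)` and
lies at height `m_g(s,t)`. -/
theorem stmt5 (σ : ℝ) (hσ : 0 < σ) (g : ℝ → ℝ)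
    (hg : ContinuousOn g (Set.Icc 0 σ))
    (hnonneg : ∀ x ∈ Set.Icc (0:ℝ) σ, 0 ≤ g x)
    (h0 : g 0 = 0) (h1 : g σ = 0)
    (m : ℝ → ℝ → ℝ)
    (hm : ∀ s t : ℝ, m s t = sInf (g '' Set.Icc (min s t) (max s t)))
    (d : ℝ → ℝ → ℝ)
    (hd : ∀ s t : ℝ, d s t = g s + g t - 2 * m s t)
    (s t : ℝ) (hs : 0 ≤ s) (hst : s < t) (ht : t ≤ σ) :
    (∀ x ∈ Set.Icc (0:ℝ) σ, d s x + d x t = d s t → ∃ r ∈ Set.Icc s t, d x r = 0) ∧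
    (∀ r ∈ Set.Icc s t, g r = m s t →
      d 0 r = m s t ∧ d 0 s = d 0 r + d r s ∧ d 0 t = d 0 r + d r t) :=
  stmt5_general σ g hg hnonneg h0 m hm d hd s t hs hst ht
end

section
/- Let Z : [0,1] → [0,∞) be continuous and let D be a pseudo-metric on [0,1] satisfying D(0,t) = Z_t and D(s,t) ≤ Z_s + Z_t − 2 min_{[s∧t, s∨t]} Z for all s,t. Fix s ∈ [0,1] and define φ_s(t) = sup{ r ≤ s : Z_r ≤ t } for 0 ≤ t ≤ Z_s (assuming Z_0 = 0 so this is well-defined). Then Z_{φ_s(t)} = t for all t ∈ [0, Z_s], and D(φ_s(t), φ_s(t')) = t' − t for all 0 ≤ t ≤ t' ≤ Z_s. Hence t ↦ φ_s(t) projects to a geodesic from the class of 0 to the class of s in the quotient metric space. -/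
/-! `φ_s(t)` is the last time before `s` at which `Z` is at most `t`. By the intermediate value
theorem `Z` takes the value `t` there, and after that time `Z` stays above `t` up to `s`. Hence for
`t ≤ t'` the minimum of `Z` between `φ_s(t)` and `φ_s(t')` is `t`, so the assumed upper bound gives
`D(φ_s(t), φ_s(t')) ≤ t' - t`, while the triangle inequality through `0` gives the reverse bound. -/

open Set

noncomputable def lastTimeBelow (Z : ℝ → ℝ) (a s t : ℝ) : ℝ :=
  sSup (Icc a s ∩ Z ⁻¹' Iic t)

section lastTimeBelow

variable {Z : ℝ → ℝ} {a s t : ℝ}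

lemma le_lastTimeBelow {r : ℝ} (hr : r ∈ Icc a s ∩ Z ⁻¹' Iic t) : r ≤ lastTimeBelow Z a s t :=
  le_csSup (bddAbove_Icc.mono inter_subset_left) hr

lemma lastTimeBelow_mem (hZc : ContinuousOn Z (Icc a s)) (has : a ≤ s) (hZa : Z a ≤ t) :
    lastTimeBelow Z a s t ∈ Icc a s ∩ Z ⁻¹' Iic t :=
  (hZc.preimage_isClosed_of_isClosed isClosed_Icc isClosed_Iic).csSup_mem
    ⟨a, ⟨le_rfl, has⟩, hZa⟩ (bddAbove_Icc.mono inter_subset_left)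

lemma lastTimeBelow_mono {t' : ℝ} (has : a ≤ s) (hZa : Z a ≤ t) (htt' : t ≤ t') :
    lastTimeBelow Z a s t ≤ lastTimeBelow Z a s t' :=
  csSup_le_csSup (bddAbove_Icc.mono inter_subset_left) ⟨a, ⟨le_rfl, has⟩, hZa⟩
    (inter_subset_inter_right _ (preimage_mono (Iic_subset_Iic.2 htt')))

lemma apply_lastTimeBelow (hZc : ContinuousOn Z (Icc a s)) (has : a ≤ s) (hZa : Z a ≤ t)
    (hts : t ≤ Z s) : Z (lastTimeBelow Z a s t) = t := by
  obtain ⟨⟨hal, hls⟩, hZl⟩ := lastTimeBelow_mem hZc has hZa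
  obtain ⟨r, ⟨hlr, hrs⟩, hZr⟩ :=
    intermediate_value_Icc hls (hZc.mono (Icc_subset_Icc_left hal)) ⟨hZl, hts⟩
  have hrl : r ≤ lastTimeBelow Z a s t := le_lastTimeBelow ⟨⟨hal.trans hlr, hrs⟩, hZr.le⟩
  rwa [← le_antisymm hrl hlr]

lemma le_apply_of_lastTimeBelow_le (hZc : ContinuousOn Z (Icc a s)) (has : a ≤ s)
    (hZa : Z a ≤ t) (hts : t ≤ Z s) {r : ℝ} (hr : r ∈ Icc (lastTimeBelow Z a s t) s) :
    t ≤ Z r := by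
  by_contra! hZr
  have hal : a ≤ lastTimeBelow Z a s t := (lastTimeBelow_mem hZc has hZa).1.1
  have hrl : r ≤ lastTimeBelow Z a s t := le_lastTimeBelow ⟨⟨hal.trans hr.1, hr.2⟩, hZr.le⟩
  rw [le_antisymm hrl hr.1, apply_lastTimeBelow hZc has hZa hts] at hZr
  exact hZr.false

end lastTimeBelow

lemma eq_sub_of_forall_apply_le {Z : ℝ → ℝ} {D : ℝ → ℝ → ℝ}
    (htri : ∀ r s t, D r t ≤ D r s + D s t)
    (hD0 : ∀ t ∈ Icc (0:ℝ) 1, D 0 t = Z t)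
    (hbound : ∀ s ∈ Icc (0:ℝ) 1, ∀ t ∈ Icc (0:ℝ) 1,
      D s t ≤ Z s + Z t - 2 * sInf (Z '' Icc (min s t) (max s t)))
    {u v : ℝ} (hu : u ∈ Icc (0:ℝ) 1) (hv : v ∈ Icc (0:ℝ) 1) (huv : u ≤ v)
    (hmin : ∀ r ∈ Icc u v, Z u ≤ Z r) : D u v = Z v - Z u := by
  have hinf : sInf (Z '' Icc u v) = Z u :=
    IsLeast.csInf_eq ⟨mem_image_of_mem Z ⟨le_rfl, huv⟩, forall_mem_image.2 hmin⟩
  have hup := hbound u hu v hv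
  rw [min_eq_left huv, max_eq_right huv, hinf] at hup
  have hlow := htri 0 u v
  rw [hD0 u hu, hD0 v hv] at hlow
  linarith

theorem stmt7_general (Z : ℝ → ℝ) (hZc : ContinuousOn Z (Set.Icc 0 1))
    (hZ0 : Z 0 = 0)
    (D : ℝ → ℝ → ℝ)
    (htri : ∀ r s t, D r t ≤ D r s + D s t)
    (hD0 : ∀ t ∈ Set.Icc (0:ℝ) 1, D 0 t = Z t)
    (hbound : ∀ s ∈ Set.Icc (0:ℝ) 1, ∀ t ∈ Set.Icc (0:ℝ) 1,
      D s t ≤ Z s + Z t - 2 * sInf (Z '' Set.Icc (min s t) (max s t)))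
    (s : ℝ) (hs : s ∈ Set.Icc (0:ℝ) 1)
    (φ : ℝ → ℝ)
    (hφ : ∀ t : ℝ, φ t = sSup {r : ℝ | 0 ≤ r ∧ r ≤ s ∧ Z r ≤ t}) :
    (∀ t ∈ Set.Icc (0:ℝ) (Z s), Z (φ t) = t) ∧
    (∀ t t' : ℝ, 0 ≤ t → t ≤ t' → t' ≤ Z s → D (φ t) (φ t') = t' - t) := by
  have hφ_eq : φ = lastTimeBelow Z 0 s := funext fun t => (hφ t).trans <|
    congrArg sSup (Set.ext fun _ => and_assoc.symm)
  subst hφ_eq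
  have hZc' : ContinuousOn Z (Icc 0 s) := hZc.mono (Icc_subset_Icc_right hs.2)
  have hmem : ∀ t, 0 ≤ t → lastTimeBelow Z 0 s t ∈ Icc (0:ℝ) 1 := fun t ht =>
    Icc_subset_Icc_right hs.2 (lastTimeBelow_mem hZc' hs.1 (hZ0.trans_le ht)).1
  refine ⟨fun t ht => apply_lastTimeBelow hZc' hs.1 (hZ0.trans_le ht.1) ht.2, ?_⟩
  intro t t' ht htt' ht's
  have hZ0t : Z 0 ≤ t := hZ0.trans_le ht
  have hZt : Z (lastTimeBelow Z 0 s t) = t := apply_lastTimeBelow hZc' hs.1 hZ0t (htt'.trans ht's)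
  have hZt' : Z (lastTimeBelow Z 0 s t') = t' :=
    apply_lastTimeBelow hZc' hs.1 (hZ0t.trans htt') ht's
  have hmin : ∀ r ∈ Icc (lastTimeBelow Z 0 s t) (lastTimeBelow Z 0 s t'),
      Z (lastTimeBelow Z 0 s t) ≤ Z r := fun r hr =>
    hZt.symm ▸ le_apply_of_lastTimeBelow_le hZc' hs.1 hZ0t (htt'.trans ht's)
      ⟨hr.1, hr.2.trans (lastTimeBelow_mem hZc' hs.1 (hZ0t.trans htt')).1.2⟩
  rw [eq_sub_of_forall_apply_le htri hD0 hbound (hmem t ht) (hmem t' (ht.trans htt'))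
    (lastTimeBelow_mono hs.1 hZ0t htt') hmin, hZt, hZt']

/-- the simple geodesic. With `φ_s(t) = sup{r ≤ s : Z_r ≤ t}` one has
`Z_{φ_s(t)} = t` and `D(φ_s(t), φ_s(t')) = t' - t` for `0 ≤ t ≤ t' ≤ Z_s`; hence
`t ↦ φ_s(t)` projects to a geodesic from the class of `0` to the class of `s`. -/
theorem stmt7 (Z : ℝ → ℝ) (hZc : ContinuousOn Z (Set.Icc 0 1))
    (hZ0 : Z 0 = 0) (hZnn : ∀ t ∈ Set.Icc (0:ℝ) 1, 0 ≤ Z t)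
    (D : ℝ → ℝ → ℝ)
    (hsymm : ∀ s t, D s t = D t s)
    (hnn : ∀ s t, 0 ≤ D s t)
    (htri : ∀ r s t, D r t ≤ D r s + D s t)
    (hD0 : ∀ t ∈ Set.Icc (0:ℝ) 1, D 0 t = Z t)
    (hbound : ∀ s ∈ Set.Icc (0:ℝ) 1, ∀ t ∈ Set.Icc (0:ℝ) 1,
      D s t ≤ Z s + Z t - 2 * sInf (Z '' Set.Icc (min s t) (max s t)))
    (s : ℝ) (hs : s ∈ Set.Icc (0:ℝ) 1) (hZs : 0 < Z s)
    (φ : ℝ → ℝ)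
    (hφ : ∀ t : ℝ, φ t = sSup {r : ℝ | 0 ≤ r ∧ r ≤ s ∧ Z r ≤ t}) :
    (∀ t ∈ Set.Icc (0:ℝ) (Z s), Z (φ t) = t) ∧
    (∀ t t' : ℝ, 0 ≤ t → t ≤ t' → t' ≤ Z s → D (φ t) (φ t') = t' - t) :=
  stmt7_general Z hZc hZ0 D htri hD0 hbound s hs φ hφ
end

section
/- Let g : [0,σ] → [0,∞) be continuous, vanishing exactly at 0 and σ, and not constant on any nontrivial interval. Then a vertex a ≠ ρ_g of T_g belongs to the skeleton Sk(T_g) (i.e. T_g \ {a} is disconnected) if and only if p_g^{-1}(a) is not a singleton; moreover the root ρ_g does not belong to Sk(T_g). -/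
/-!
For `s ≤ t` the coding map identifies `s` and `t` exactly when `g s` and `g t` are both the
minimum of `g` on `[s, t]`. Since `g` vanishes only at the ends, the root has exactly the
preimages `0` and `σ`, so `T \ {root}` is the continuous image of `(0, σ)`. A point with a single
preimage `s ∈ (0, σ)` leaves the images of `[0, s)` and `(s, σ]`, which are connected and share
the root. If `a = p s = p t` with `s < t`, the closed images of `[s, t]` and of `[0, s] ∪ [t, σ]`
cover `T \ {a}` and meet only at `a`, since a point of `[s, t]` glued to a point outside has to be
a minimum of `g` on `[s, t]` as well; the first image contains a point other than `a` because `g`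
is not constant on `[s, t]`, the second contains the root.
-/

open Set

lemma sInf_image_Icc_le {g : ℝ → ℝ} {s t x : ℝ} (hg : ContinuousOn g (Icc s t))
    (hx : x ∈ Icc s t) : sInf (g '' Icc s t) ≤ g x :=
  csInf_le (isCompact_Icc.image_of_continuousOn hg).bddBelow (mem_image_of_mem g hx)

lemma exists_apply_eq_sInf_image_Icc {g : ℝ → ℝ} {s t : ℝ} (hg : ContinuousOn g (Icc s t))
    (hst : s ≤ t) : ∃ w ∈ Icc s t, g w = sInf (g '' Icc s t) :=
  (isCompact_Icc.image_of_continuousOn hg).sInf_mem ((nonempty_Icc.2 hst).image g)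

/-- `p` plays the role of the projection `p_g : [0, σ] → T_g`. -/
def IsTreeCoding {T : Type*} [MetricSpace T] (g : ℝ → ℝ) (σ : ℝ) (p : ℝ → T) : Prop :=
  ∀ s ∈ Icc 0 σ, ∀ t ∈ Icc 0 σ, s ≤ t →
    dist (p s) (p t) = g s + g t - 2 * sInf (g '' Icc s t)

namespace IsTreeCoding

variable {T : Type*} [MetricSpace T] {g : ℝ → ℝ} {σ : ℝ} {p : ℝ → T}

lemma exists_dist_eq (hp : IsTreeCoding g σ p) (hg : ContinuousOn g (Icc 0 σ)) {s t : ℝ}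
    (hs : s ∈ Icc 0 σ) (ht : t ∈ Icc 0 σ) (hst : s ≤ t) :
    ∃ w ∈ Icc s t, dist (p s) (p t) = (g s - g w) + (g t - g w) ∧
      ∀ x ∈ Icc s t, g w ≤ g x := by
  have hgst : ContinuousOn g (Icc s t) := hg.mono (Icc_subset_Icc hs.1 ht.2)
  obtain ⟨w, hw, hwe⟩ := exists_apply_eq_sInf_image_Icc hgst hst
  refine ⟨w, hw, by rw [hp s hs t ht hst, hwe]; ring, fun x hx => ?_⟩
  exact hwe ▸ sInf_image_Icc_le hgst hx

lemma apply_eq_apply_iff (hp : IsTreeCoding g σ p) (hg : ContinuousOn g (Icc 0 σ)) {s t : ℝ}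
    (hs : s ∈ Icc 0 σ) (ht : t ∈ Icc 0 σ) (hst : s ≤ t) :
    p s = p t ↔ ∀ x ∈ Icc s t, g s ≤ g x ∧ g t ≤ g x := by
  obtain ⟨w, hw, hdist, hmin⟩ := hp.exists_dist_eq hg hs ht hst
  have hws := hmin s (left_mem_Icc.2 hst)
  have hwt := hmin t (right_mem_Icc.2 hst)
  rw [← dist_eq_zero, hdist]
  constructor
  · intro h x hx
    constructor <;> linarith [hmin x hx]
  · intro h
    linarith [(h w hw).1, (h w hw).2]

lemma height_eq_of_apply_eq (hp : IsTreeCoding g σ p) (hg : ContinuousOn g (Icc 0 σ)) {s t : ℝ}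
    (hs : s ∈ Icc 0 σ) (ht : t ∈ Icc 0 σ) (hst : s ≤ t) (h : p s = p t) : g s = g t :=
  have hmin := (hp.apply_eq_apply_iff hg hs ht hst).1 h
  le_antisymm (hmin t (right_mem_Icc.2 hst)).1 (hmin s (left_mem_Icc.2 hst)).2

lemma dist_le_of_forall_abs_sub_le (hp : IsTreeCoding g σ p) (hg : ContinuousOn g (Icc 0 σ))
    {s t c η : ℝ} (hs : s ∈ Icc 0 σ) (ht : t ∈ Icc 0 σ) (hst : s ≤ t)
    (h : ∀ x ∈ Icc s t, |g x - c| ≤ η) : dist (p s) (p t) ≤ 4 * η := by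
  obtain ⟨w, hw, hdist, -⟩ := hp.exists_dist_eq hg hs ht hst
  have hs' := abs_le.1 (h s (left_mem_Icc.2 hst))
  have ht' := abs_le.1 (h t (right_mem_Icc.2 hst))
  have hw' := abs_le.1 (h w hw)
  rw [hdist]
  linarith [hs'.2, ht'.2, hw'.1]

lemma continuousOn (hp : IsTreeCoding g σ p) (hg : ContinuousOn g (Icc 0 σ)) :
    ContinuousOn p (Icc 0 σ) := by
  rw [Metric.continuousOn_iff]
  intro b hb ε hε
  obtain ⟨δ, hδ, hgδ⟩ := Metric.continuousWithinAt_iff.1 (hg b hb) (ε / 5) (by positivity)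
  have hnear : ∀ x ∈ Icc 0 σ, |x - b| < δ → |g x - g b| ≤ ε / 5 :=
    fun x hx hxb => (hgδ hx hxb).le
  refine ⟨δ, hδ, fun t ht htb => ?_⟩
  rw [Real.dist_eq] at htb
  rcases le_total t b with htb' | hbt
  · have := hp.dist_le_of_forall_abs_sub_le hg ht hb htb' fun x hx =>
      hnear x ⟨ht.1.trans hx.1, hx.2.trans hb.2⟩ (by
        rw [abs_lt] at htb ⊢; constructor <;> linarith [hx.1, hx.2])
    linarith
  · have := hp.dist_le_of_forall_abs_sub_le hg hb ht hbt fun x hx =>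
      hnear x ⟨hb.1.trans hx.1, hx.2.trans ht.2⟩ (by
        rw [abs_lt] at htb ⊢; constructor <;> linarith [hx.1, hx.2])
    rw [dist_comm]
    linarith

lemma apply_eq_left_of_apply_eq (hp : IsTreeCoding g σ p) (hg : ContinuousOn g (Icc 0 σ))
    {w s v : ℝ} (hw : w ∈ Icc 0 σ) (hs : s ∈ Icc 0 σ) (hv : v ∈ Icc 0 σ) (hws : w ≤ s)
    (hsv : s ≤ v) (hmin : ∀ x ∈ Icc s v, g s ≤ g x) (hwv : p w = p v) : p s = p v := by
  have hvs := ((hp.apply_eq_apply_iff hg hw hv (hws.trans hsv)).1 hwv s ⟨hws, hsv⟩).2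
  exact (hp.apply_eq_apply_iff hg hs hv hsv).2 fun x hx => ⟨hmin x hx, hvs.trans (hmin x hx)⟩

lemma apply_eq_right_of_apply_eq (hp : IsTreeCoding g σ p) (hg : ContinuousOn g (Icc 0 σ))
    {v t w : ℝ} (hv : v ∈ Icc 0 σ) (ht : t ∈ Icc 0 σ) (hw : w ∈ Icc 0 σ) (hvt : v ≤ t)
    (htw : t ≤ w) (hmin : ∀ x ∈ Icc v t, g t ≤ g x) (hvw : p v = p w) : p v = p t := by
  have hvt' := ((hp.apply_eq_apply_iff hg hv hw (hvt.trans htw)).1 hvw t ⟨hvt, htw⟩).1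
  exact (hp.apply_eq_apply_iff hg hv ht hvt).2 fun x hx => ⟨hvt'.trans (hmin x hx), hmin x hx⟩

lemma exists_apply_ne (hp : IsTreeCoding g σ p) (hg : ContinuousOn g (Icc 0 σ)) {s t : ℝ}
    (hs : s ∈ Icc 0 σ) (ht : t ∈ Icc 0 σ) (hvar : ∃ x ∈ Icc s t, ∃ y ∈ Icc s t, g x ≠ g y) :
    ∃ u ∈ Icc s t, p u ≠ p s := by
  obtain ⟨x, hx, y, hy, hxy⟩ := hvar
  by_contra! hall
  have hsub : Icc s t ⊆ Icc 0 σ := Icc_subset_Icc hs.1 ht.2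
  have heq : ∀ u ∈ Icc s t, g s = g u := fun u hu =>
    hp.height_eq_of_apply_eq hg hs (hsub hu) hu.1 (hall u hu).symm
  exact hxy ((heq x hx).symm.trans (heq y hy))

lemma not_isConnected_compl_singleton (hp : IsTreeCoding g σ p)
    (hg : ContinuousOn g (Icc 0 σ)) (hsurj : SurjOn p (Icc 0 σ) univ) {s t : ℝ}
    (hs : s ∈ Icc 0 σ) (ht : t ∈ Icc 0 σ) (hst : s < t) (hpst : p s = p t) (hroot : p 0 ≠ p s)
    (hvar : ∃ x ∈ Icc s t, ∃ y ∈ Icc s t, g x ≠ g y) : ¬ IsConnected ({p s}ᶜ : Set T) := by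
  intro hconn
  have hpc := hp.continuousOn hg
  have hmin := (hp.apply_eq_apply_iff hg hs ht hst.le).1 hpst
  have hsub : Icc 0 s ∪ Icc t σ ⊆ Icc 0 σ :=
    union_subset (Icc_subset_Icc_right hs.2) (Icc_subset_Icc_left ht.1)
  have hclosed₁ : IsClosed (p '' Icc s t) :=
    (isCompact_Icc.image_of_continuousOn (hpc.mono (Icc_subset_Icc hs.1 ht.2))).isClosed
  have hclosed₂ : IsClosed (p '' (Icc 0 s ∪ Icc t σ)) :=
    ((isCompact_Icc.union isCompact_Icc).image_of_continuousOn (hpc.mono hsub)).isClosed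
  have hcover : ({p s}ᶜ : Set T) ⊆ p '' Icc s t ∪ p '' (Icc 0 s ∪ Icc t σ) := by
    intro x _
    obtain ⟨v, hv, rfl⟩ := hsurj (mem_univ x)
    rcases le_total v s with hvs | hsv
    · exact Or.inr ⟨v, Or.inl ⟨hv.1, hvs⟩, rfl⟩
    rcases le_total v t with hvt | htv
    · exact Or.inl ⟨v, ⟨hsv, hvt⟩, rfl⟩
    · exact Or.inr ⟨v, Or.inr ⟨htv, hv.2⟩, rfl⟩
  obtain ⟨u, hu, hpu⟩ := hp.exists_apply_ne hg hs ht hvar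
  obtain ⟨x, hxs, ⟨v, hv, rfl⟩, ⟨w, hw, hwv⟩⟩ :=
    isPreconnected_closed_iff.1 hconn.isPreconnected _ _ hclosed₁ hclosed₂ hcover
      ⟨p u, hpu, u, hu, rfl⟩ ⟨p 0, hroot, 0, Or.inl ⟨le_rfl, hs.1⟩, rfl⟩
  have hv' : v ∈ Icc 0 σ := Icc_subset_Icc hs.1 ht.2 hv
  refine hxs ?_
  rcases hw with hw | hw
  · exact (hp.apply_eq_left_of_apply_eq hg (hsub (Or.inl hw)) hs hv' hw.2 hv.1
      (fun x hx => (hmin x ⟨hx.1, hx.2.trans hv.2⟩).1) hwv).symm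
  · exact (hp.apply_eq_right_of_apply_eq hg hv' ht (hsub (Or.inr hw)) hv.2 hw.1
      (fun x hx => (hmin x ⟨hv.1.trans hx.1, hx.2⟩).2) hwv.symm).trans hpst.symm

end IsTreeCoding

section ClosedPath

variable {T : Type*} [TopologicalSpace T] {p : ℝ → T} {σ : ℝ}

lemma isConnected_compl_singleton_of_unique (hpc : ContinuousOn p (Icc 0 σ))
    (hsurj : SurjOn p (Icc 0 σ) univ) (hloop : p 0 = p σ) {s : ℝ} (hs : s ∈ Ioo 0 σ)
    (huniq : ∀ u ∈ Icc 0 σ, p u = p s → u = s) : IsConnected ({p s}ᶜ : Set T) := by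
  have hcompl : ({p s}ᶜ : Set T) = p '' Ico 0 s ∪ p '' Ioc s σ := by
    ext x
    refine ⟨fun hx => ?_, ?_⟩
    · obtain ⟨u, hu, rfl⟩ := hsurj (mem_univ x)
      rcases lt_or_gt_of_ne fun h : u = s => hx (h ▸ rfl) with hus | hsu
      · exact Or.inl ⟨u, ⟨hu.1, hus⟩, rfl⟩
      · exact Or.inr ⟨u, ⟨hsu, hu.2⟩, rfl⟩
    · rintro (⟨u, hu, rfl⟩ | ⟨u, hu, rfl⟩) hus
      · exact hu.2.ne (huniq u ⟨hu.1, hu.2.le.trans hs.2.le⟩ hus)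
      · exact hu.1.ne' (huniq u ⟨hs.1.le.trans hu.1.le, hu.2⟩ hus)
  rw [hcompl]
  refine IsConnected.union ⟨p 0, ⟨0, ⟨le_rfl, hs.1⟩, rfl⟩, ⟨σ, ⟨hs.2, le_rfl⟩, hloop.symm⟩⟩
    ?_ ?_
  · exact (isConnected_Ico hs.1).image p (hpc.mono fun x hx => ⟨hx.1, hx.2.le.trans hs.2.le⟩)
  · exact (isConnected_Ioc hs.2).image p (hpc.mono fun x hx => ⟨hs.1.le.trans hx.1.le, hx.2⟩)

lemma isConnected_compl_singleton_zero (hσ : 0 < σ) (hpc : ContinuousOn p (Icc 0 σ))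
    (hsurj : SurjOn p (Icc 0 σ) univ) (hloop : p 0 = p σ) (hroot : ∀ u ∈ Ioo 0 σ, p 0 ≠ p u) :
    IsConnected ({p 0}ᶜ : Set T) := by
  have hcompl : ({p 0}ᶜ : Set T) = p '' Ioo 0 σ := by
    ext x
    refine ⟨fun hx => ?_, fun ⟨u, hu, hux⟩ => hux ▸ (hroot u hu).symm⟩
    obtain ⟨u, hu, rfl⟩ := hsurj (mem_univ x)
    refine ⟨u, ⟨hu.1.lt_of_ne ?_, hu.2.lt_of_ne ?_⟩, rfl⟩
    · rintro rfl; exact hx rfl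
    · rintro rfl; exact hx hloop.symm
  rw [hcompl]
  exact (isConnected_Ioo hσ).image p (hpc.mono Ioo_subset_Icc_self)

end ClosedPath

/-- if `g` vanishes exactly at `0` and `σ` and is not constant on any
nontrivial interval, then a point `a ≠ ρ_g` of the tree `T_g` coded by `g` belongs
to the skeleton (`T_g \ {a}` disconnected) iff `a` has more than one preimage under
`p_g`; moreover the root is not in the skeleton. -/
theorem stmt14 (σ : ℝ) (hσ : 0 < σ) (g : ℝ → ℝ)
    (hg : ContinuousOn g (Set.Icc 0 σ))
    (h0 : g 0 = 0) (h1 : g σ = 0)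
    (hpos : ∀ x ∈ Set.Ioo (0:ℝ) σ, 0 < g x)
    (hnotconst : ∀ u v : ℝ, 0 ≤ u → u < v → v ≤ σ →
      ∃ x ∈ Set.Icc u v, ∃ y ∈ Set.Icc u v, g x ≠ g y)
    (m : ℝ → ℝ → ℝ)
    (hm : ∀ s t : ℝ, m s t = sInf (g '' Set.Icc (min s t) (max s t)))
    (d : ℝ → ℝ → ℝ)
    (hd : ∀ s t : ℝ, d s t = g s + g t - 2 * m s t)
    (T : Type*) [MetricSpace T] (p : ℝ → T)
    (hsurj : ∀ x : T, ∃ s ∈ Set.Icc (0:ℝ) σ, p s = x)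
    (hiso : ∀ s ∈ Set.Icc (0:ℝ) σ, ∀ t ∈ Set.Icc (0:ℝ) σ, dist (p s) (p t) = d s t) :
    (∀ a : T, a ≠ p 0 →
      (¬ IsConnected ({a}ᶜ : Set T) ↔
        ∃ s ∈ Set.Icc (0:ℝ) σ, ∃ t ∈ Set.Icc (0:ℝ) σ, s ≠ t ∧ p s = a ∧ p t = a)) ∧
    IsConnected (({p 0}ᶜ : Set T)) := by
  have hp : IsTreeCoding g σ p := fun s hs t ht hst => by
    rw [hiso s hs t ht, hd, hm, min_eq_left hst, max_eq_right hst]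
  have hgnn : ∀ x ∈ Icc 0 σ, 0 ≤ g x := fun x hx => by
    rcases hx.1.eq_or_lt with rfl | hx0
    · exact h0.ge
    rcases hx.2.eq_or_lt with rfl | hxσ
    · exact h1.ge
    exact (hpos x ⟨hx0, hxσ⟩).le
  have hsurj' : SurjOn p (Icc 0 σ) univ := fun x _ => hsurj x
  have hpc := hp.continuousOn hg
  have h0σ : (0 : ℝ) ∈ Icc 0 σ := left_mem_Icc.2 hσ.le
  have hloop : p 0 = p σ := (hp.apply_eq_apply_iff hg h0σ (right_mem_Icc.2 hσ.le) hσ.le).2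
    fun x hx => ⟨h0.symm ▸ hgnn x hx, h1.symm ▸ hgnn x hx⟩
  have hroot : ∀ u ∈ Ioo 0 σ, p 0 ≠ p u := fun u hu h => by
    have := ((hp.apply_eq_apply_iff hg h0σ (Ioo_subset_Icc_self hu) hu.1.le).1 h 0
      ⟨le_rfl, hu.1.le⟩).2
    linarith [hpos u hu]
  refine ⟨fun a ha => ⟨fun hdisc => ?_, ?_⟩,
    isConnected_compl_singleton_zero hσ hpc hsurj' hloop hroot⟩
  · obtain ⟨s, hs, rfl⟩ := hsurj a
    by_contra! hno
    refine hdisc (isConnected_compl_singleton_of_unique hpc hsurj' hloop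
      ⟨hs.1.lt_of_ne ?_, hs.2.lt_of_ne ?_⟩ fun u hu hus => ?_)
    · rintro rfl; exact ha rfl
    · rintro rfl; exact ha hloop.symm
    · by_contra hne; exact hno s hs u hu (Ne.symm hne) rfl hus
  · rintro ⟨s, hs, t, ht, hst, rfl, hpt⟩
    rcases hst.lt_or_gt with hst | hts
    · exact hp.not_isConnected_compl_singleton hg hsurj' hs ht hst hpt.symm (Ne.symm ha)
        (hnotconst s t hs.1 hst ht.2)
    · rw [← hpt] at ha ⊢
      exact hp.not_isConnected_compl_singleton hg hsurj' ht hs hts hpt (Ne.symm ha)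
        (hnotconst t s ht.1 hts hs.2)
end

section
/- Let Z : [0,1] → [0,∞) be continuous with Z_0 = Z_1 = 0 and Z_t > 0 for t ∈ (0,1). For η > 0, choose ε > 0 such that Z_s < η for all s ∈ [0,ε] ∪ [1−ε,1], and set α = inf_{s ∈ [ε, 1−ε]} Z_s > 0. Then for any r, r' ∈ [0,1] with Z_r ≥ η and Z_{r'} ≥ η, the functions φ_r and φ_{r'} (where φ_u(t) = sup{ v ≤ u : Z_v ≤ t }) satisfy φ_r(t) = φ_{r'}(t) for all t ∈ [0, α). -/
/-!
A point `r ∈ [0,1]` with `Z r ≥ η` cannot lie in `[0,ε] ∪ [1-ε,1]`, so it lies in `[ε, 1-ε]`,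
where `Z ≥ α`, and `α > 0` because the continuous positive `Z` attains its infimum on this
compact interval. For `t < α` the sublevel set `{Z ≤ t}` therefore misses `(ε, r]`, so
`φ_r(t) = φ_ε(t)`, and likewise `φ_{r'}(t) = φ_ε(t)`.
-/

open Set

noncomputable def simpleGeodesic (Z : ℝ → ℝ) (u t : ℝ) : ℝ :=
  sSup {v : ℝ | 0 ≤ v ∧ v ≤ u ∧ Z v ≤ t}

theorem simpleGeodesic_eq_of_lt_on_Ioc {Z : ℝ → ℝ} {a u t : ℝ} (hau : a ≤ u)
    (h : ∀ v ∈ Ioc a u, t < Z v) : simpleGeodesic Z u t = simpleGeodesic Z a t := by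
  unfold simpleGeodesic
  congr 1
  ext v
  simp only [mem_ofPred_eq]
  constructor
  · rintro ⟨h0, hvu, hvt⟩
    exact ⟨h0, not_lt.1 fun hav => (h v ⟨hav, hvu⟩).not_ge hvt, hvt⟩
  · rintro ⟨h0, hva, hvt⟩
    exact ⟨h0, hva.trans hau, hvt⟩

theorem sInf_image_pos_of_isCompact {X : Type*} [TopologicalSpace X] {f : X → ℝ} {s : Set X}
    (hs : IsCompact s) (hne : s.Nonempty) (hf : ContinuousOn f s) (hpos : ∀ x ∈ s, 0 < f x) :
    0 < sInf (f '' s) := by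
  obtain ⟨x, hx, hfx⟩ := (hs.image_of_continuousOn hf).sInf_mem (hne.image f)
  exact hfx ▸ hpos x hx

theorem mem_Icc_of_le_of_lt_near_endpoints {Z : ℝ → ℝ} {η ε s : ℝ}
    (hsmall : ∀ s ∈ Icc (0:ℝ) 1, s ∈ Icc (0:ℝ) ε ∪ Icc (1-ε) 1 → Z s < η)
    (hs : s ∈ Icc (0:ℝ) 1) (hZs : η ≤ Z s) : s ∈ Icc ε (1 - ε) := by
  by_contra h
  simp only [mem_Icc, not_and_or, not_le] at h
  exact (hsmall s hs (h.imp (fun h => ⟨hs.1, h.le⟩) (fun h => ⟨h.le, hs.2⟩))).not_ge hZs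

theorem stmt19_general (Z : ℝ → ℝ) (hZc : ContinuousOn Z (Set.Icc 0 1))
    (hZpos : ∀ t ∈ Set.Ioo (0:ℝ) 1, 0 < Z t)
    (η ε : ℝ) (hε : 0 < ε)
    (hsmall : ∀ s ∈ Set.Icc (0:ℝ) 1,
      s ∈ Set.Icc (0:ℝ) ε ∪ Set.Icc (1-ε) 1 → Z s < η)
    (α : ℝ) (hα : α = sInf (Z '' Set.Icc ε (1-ε)))
    (r r' : ℝ) (hr : r ∈ Set.Icc (0:ℝ) 1) (hr' : r' ∈ Set.Icc (0:ℝ) 1)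
    (hZr : η ≤ Z r) (hZr' : η ≤ Z r') :
    0 < α ∧ ∀ t : ℝ, 0 ≤ t → t < α →
      sSup {v : ℝ | 0 ≤ v ∧ v ≤ r ∧ Z v ≤ t} =
        sSup {v : ℝ | 0 ≤ v ∧ v ≤ r' ∧ Z v ≤ t} := by
  have hrε := mem_Icc_of_le_of_lt_near_endpoints hsmall hr hZr
  have hr'ε := mem_Icc_of_le_of_lt_near_endpoints hsmall hr' hZr'
  have hinner : Icc ε (1 - ε) ⊆ Ioo 0 1 :=
    fun v hv => ⟨hε.trans_le hv.1, hv.2.trans_lt (by linarith)⟩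
  have hZpos' : ∀ v ∈ Icc ε (1 - ε), 0 < Z v := fun v hv => hZpos v (hinner hv)
  have hαpos : 0 < α := hα ▸ sInf_image_pos_of_isCompact isCompact_Icc ⟨r, hrε⟩
    (hZc.mono (hinner.trans Ioo_subset_Icc_self)) hZpos'
  have hαle : ∀ v ∈ Icc ε (1 - ε), α ≤ Z v := fun v hv =>
    hα ▸ csInf_le ⟨0, forall_mem_image.2 fun w hw => (hZpos' w hw).le⟩ (mem_image_of_mem Z hv)
  refine ⟨hαpos, fun t _ htα => ?_⟩
  have hcoal : ∀ u ∈ Icc ε (1 - ε), simpleGeodesic Z u t = simpleGeodesic Z ε t :=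
    fun u hu => simpleGeodesic_eq_of_lt_on_Ioc hu.1
      fun v hv => htα.trans_le (hαle v ⟨hv.1.le, hv.2.trans hu.2⟩)
  exact (hcoal r hrε).trans (hcoal r' hr'ε).symm

/-- coalescence of simple geodesics near the root. With
`α = inf_{[ε,1-ε]} Z > 0`, any two points `r, r'` with `Z_r ≥ η` and `Z_{r'} ≥ η`
have `φ_r(t) = φ_{r'}(t)` for all `t ∈ [0,α)`. -/
theorem stmt19 (Z : ℝ → ℝ) (hZc : ContinuousOn Z (Set.Icc 0 1))
    (hZ0 : Z 0 = 0) (hZ1 : Z 1 = 0)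
    (hZpos : ∀ t ∈ Set.Ioo (0:ℝ) 1, 0 < Z t)
    (η ε : ℝ) (hη : 0 < η) (hε : 0 < ε) (hεhalf : ε < 1/2)
    (hsmall : ∀ s ∈ Set.Icc (0:ℝ) 1,
      s ∈ Set.Icc (0:ℝ) ε ∪ Set.Icc (1-ε) 1 → Z s < η)
    (α : ℝ) (hα : α = sInf (Z '' Set.Icc ε (1-ε)))
    (r r' : ℝ) (hr : r ∈ Set.Icc (0:ℝ) 1) (hr' : r' ∈ Set.Icc (0:ℝ) 1)
    (hZr : η ≤ Z r) (hZr' : η ≤ Z r') :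
    0 < α ∧ ∀ t : ℝ, 0 ≤ t → t < α →
      sSup {v : ℝ | 0 ≤ v ∧ v ≤ r ∧ Z v ≤ t} =
        sSup {v : ℝ | 0 ≤ v ∧ v ≤ r' ∧ Z v ≤ t} :=
  stmt19_general Z hZc hZpos η ε hε hsmall α hα r r' hr hr' hZr hZr'
end
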